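/- Let G be a group and g, l₂, …, l_m ∈ G. Define h = g l₂⁻¹ l₃⁻¹ ⋯ l_m⁻¹. Then g commutes with every l_k (2 ≤ k ≤ m) if and only if all of the following relations hold: h l_m l_{m-1} ⋯ l₂ = l_m ⋯ l₂ h, and h l_m ⋯ l₂ = l_k ⋯ l₂ h l_m ⋯ l_{k+1} for every k with 2 ≤ k ≤ m-1. -/
import Mathlib


/-- `dp l a b = l b * l (b-1) * ⋯ * l a` (the product in decreasing index order);
it is `1` when `b < a`. -/
def dp {G : Type*} [Group G] (l : ℕ → G) (a b : ℕ) : G :=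
  ((List.range' a (b + 1 - a)).reverse.map l).prod

section Aux

variable {G : Type*} [Group G] (l : ℕ → G)

lemma dp_empty {a b : ℕ} (h : b < a) : dp l a b = 1 := by
  have : b + 1 - a = 0 := by omega
  simp [dp, this]

lemma dp_single (a : ℕ) : dp l a a = l a := by
  have : a + 1 - a = 1 := by omega
  simp [dp, this]

lemma dp_succ {a b : ℕ} (h : a ≤ b + 1) : dp l a (b + 1) = l (b + 1) * dp l a b := by
  have h1 : b + 1 + 1 - a = (b + 1 - a) + 1 := by omega
  have h2 : a + 1 * (b + 1 - a) = b + 1 := by omega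
  rw [dp, h1, List.range'_concat, List.reverse_append, h2]
  simp [dp]

lemma dp_split {a k : ℕ} (h1 : a ≤ k + 1) :
    ∀ b, k ≤ b → dp l (k + 1) b * dp l a k = dp l a b := by
  intro b hb
  induction b, hb using Nat.le_induction with
  | base => rw [dp_empty l (Nat.lt_succ_self k), one_mul]
  | succ b hb ih =>
      rw [dp_succ l (by omega), dp_succ l (by omega), mul_assoc, ih]

lemma comm_dp {m : ℕ} (g : G) (hc : ∀ k, 2 ≤ k → k ≤ m → Commute g (l k)) :
    ∀ k, 2 ≤ k → k ≤ m → Commute g (dp l 2 k) := by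
  intro k hk2
  induction k, hk2 using Nat.le_induction with
  | base =>
      intro hm
      rw [dp_single]
      exact hc 2 le_rfl hm
  | succ k hk ih =>
      intro hkm
      rw [dp_succ l (by omega)]
      exact (hc (k + 1) (by omega) hkm).mul_right (ih (by omega))

lemma rel_iff_comm (g P D : G) :
    (g * (D * P)⁻¹ * (D * P) = P * (g * (D * P)⁻¹) * D) ↔ g * P = P * g := by
  rw [inv_mul_cancel_right, mul_inv_rev,
    show P * (g * (P⁻¹ * D⁻¹)) * D = P * g * P⁻¹ by group,
    eq_mul_inv_iff_mul_eq]

lemma relm_iff_comm (g P : G) :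
    (g * P⁻¹ * P = P * (g * P⁻¹)) ↔ g * P = P * g := by
  rw [inv_mul_cancel_right, show P * (g * P⁻¹) = P * g * P⁻¹ by group,
    eq_mul_inv_iff_mul_eq]

end Aux

/-- with `h = g l₂⁻¹ l₃⁻¹ ⋯ l_m⁻¹`, the element `g` commutes with every
`l_k` (2 ≤ k ≤ m) iff the pencil relations `h l_m ⋯ l₂ = l_m ⋯ l₂ h` and
`h l_m ⋯ l₂ = l_k ⋯ l₂ h l_m ⋯ l_{k+1}` (2 ≤ k ≤ m-1) all hold. -/
theorem stmt1 {G : Type*} [Group G] (m : ℕ) (hm : 2 ≤ m) (g : G) (l : ℕ → G)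
    (h : G) (hh : h = g * (dp l 2 m)⁻¹) :
    (∀ k, 2 ≤ k → k ≤ m → Commute g (l k)) ↔
      (h * dp l 2 m = dp l 2 m * h ∧
        ∀ k, 2 ≤ k → k ≤ m - 1 →
          h * dp l 2 m = dp l 2 k * h * dp l (k + 1) m) := by
  subst hh
  constructor
  · intro hc
    have hP := comm_dp l g hc
    refine ⟨(relm_iff_comm g (dp l 2 m)).mpr (hP m hm le_rfl).eq, ?_⟩
    intro k hk2 hkm
    have hsplit := dp_split l (a := 2) (k := k) (by omega) m (by omega)
    rw [← hsplit]
    exact (rel_iff_comm g (dp l 2 k) (dp l (k + 1) m)).mpr (hP k hk2 (by omega)).eq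
  · rintro ⟨h1, h2⟩
    have hPm : Commute g (dp l 2 m) := (relm_iff_comm g (dp l 2 m)).mp h1
    have hP : ∀ k, 2 ≤ k → k ≤ m → Commute g (dp l 2 k) := by
      intro k hk2 hkm
      rcases eq_or_lt_of_le hkm with rfl | hlt
      · exact hPm
      · have hsplit := dp_split l (a := 2) (k := k) (by omega) m (by omega)
        have hrel := h2 k hk2 (by omega)
        rw [← hsplit] at hrel
        exact (rel_iff_comm g (dp l 2 k) (dp l (k + 1) m)).mp hrel
    intro k hk2 hkm
    rcases eq_or_lt_of_le hk2 with rfl | h3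
    · have := hP 2 le_rfl hkm
      rwa [dp_single] at this
    · obtain ⟨j, rfl⟩ : ∃ j, k = j + 1 := ⟨k - 1, by omega⟩
      have e : dp l 2 (j + 1) = l (j + 1) * dp l 2 j := dp_succ l (by omega)
      have c1 := hP (j + 1) (by omega) hkm
      have c2 := hP j (by omega) (by omega)
      have hcomb : Commute g (dp l 2 (j + 1) * (dp l 2 j)⁻¹) :=
        c1.mul_right c2.inv_right
      rwa [e, mul_inv_cancel_right] at hcomb
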